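/- arXiv:1910.02039 — 5 statements merged into one kernel-verified Lean document; each statement's English description precedes it below -/
import Mathlib

section
/- The trace of the average mixing matrix of K_n with respect to its Laplacian matrix equals n − 2 + 2/n, for n ≥ 1. -/
open Matrix

theorem avg_mixing_complete_graph_lap_trace {n : ℕ} (hn : 1 ≤ n)
    (J : Matrix (Fin n) (Fin n) ℝ) (hJ : J = Matrix.of fun _ _ => 1) :
    (((n : ℝ)⁻¹ • J).hadamard ((n : ℝ)⁻¹ • J) +
      (1 - (n : ℝ)⁻¹ • J).hadamard (1 - (n : ℝ)⁻¹ • J)).trace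
    = (n : ℝ) - 2 + 2 / n := by
  subst hJ
  have hn' : (n : ℝ) ≠ 0 := by positivity
  simp only [Matrix.trace, Matrix.diag, Matrix.add_apply, Matrix.hadamard_apply,
    Matrix.smul_apply, Matrix.sub_apply, Matrix.one_apply_eq, Matrix.of_apply,
    smul_eq_mul, mul_one, Finset.sum_const, Finset.card_univ, Fintype.card_fin,
    nsmul_eq_mul]
  field_simp
  ring
end

section
/- Let X be a graph on n vertices whose Laplacian L has spectral decomposition L = Σ_{r=0}^d θ_r E_r with θ_0 = 0. Suppose each spectral idempotent of L(K_n) = nI − J (namely J/n and I − J/n) is a sum of the E_r. Then M̂_L(K_n) − M̂_L(X) is positive semidefinite, where M̂_L denotes the sum of Schur squares of the Laplacian spectral idempotents. In particular, if X is connected (so E_0 = J/n), then M̂_L(K_n) ⪰ M̂_L(X). -/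
/-!
Each idempotent of `K_n` is a sum of idempotents `E_r` of `X`, and the `E_r` are positive
semidefinite, being symmetric and idempotent. Expanding the Schur square of such a sum, the
diagonal terms are the Schur squares of the `E_r` and the cross terms `E_r ∘ E_s` are positive
semidefinite by the Schur product theorem. Summing over the two idempotents of `K_n`, whose
summands together exhaust the `E_r`, gives the claim.
-/

open Matrix

open scoped ComplexOrder

namespace Matrix

theorem IsHermitian.posSemidef_of_mul_self {n R : Type*} [Fintype n] [Ring R] [PartialOrder R]
    [StarRing R] [StarOrderedRing R] {A : Matrix n n R} (hA : A.IsHermitian)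
    (hidem : A * A = A) : A.PosSemidef := by
  simpa only [hA.eq, hidem] using posSemidef_conjTranspose_mul_self A

theorem posSemidef_sum_hadamard_self_sub {𝕜 n ι : Type*} [RCLike 𝕜] (s : Finset ι)
    {A : ι → Matrix n n 𝕜} (hA : ∀ i ∈ s, (A i).PosSemidef) :
    ((∑ i ∈ s, A i) ⊙ (∑ i ∈ s, A i) - ∑ i ∈ s, A i ⊙ A i).PosSemidef := by
  classical
  have hexpand : (∑ i ∈ s, A i) ⊙ (∑ i ∈ s, A i) - ∑ i ∈ s, A i ⊙ A i
      = ∑ i ∈ s, ∑ j ∈ s.erase i, A i ⊙ A j := by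
    ext k l
    simp only [hadamard_apply, sum_apply, sub_apply, Finset.sum_mul_sum, ← Finset.sum_sub_distrib]
    refine Finset.sum_congr rfl fun i hi => ?_
    rw [← Finset.sum_erase_add s _ hi, add_sub_cancel_right]
  rw [hexpand]
  exact posSemidef_sum s fun i hi =>
    posSemidef_sum _ fun j hj => (hA i hi).hadamard (hA j (Finset.mem_of_mem_erase hj))

end Matrix

theorem complete_graph_maximizes_lap_avg_mixing_general {n d : ℕ}
    (J : Matrix (Fin n) (Fin n) ℝ)
    (E : Fin (d + 1) → Matrix (Fin n) (Fin n) ℝ)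
    (hsym : ∀ r, (E r).IsSymm)
    (hidem : ∀ r, E r * E r = E r)
    (S : Finset (Fin (d + 1)))
    (hS1 : (n : ℝ)⁻¹ • J = ∑ r ∈ S, E r)
    (hS2 : 1 - (n : ℝ)⁻¹ • J = ∑ r ∈ Sᶜ, E r) :
    ((((n : ℝ)⁻¹ • J).hadamard ((n : ℝ)⁻¹ • J) +
        (1 - (n : ℝ)⁻¹ • J).hadamard (1 - (n : ℝ)⁻¹ • J))
      - ∑ r, (E r).hadamard (E r)).PosSemidef := by
  have hpsd : ∀ r, (E r).PosSemidef := fun r =>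
    (isHermitian_iff_isSymm.mpr (hsym r)).posSemidef_of_mul_self (hidem r)
  rw [hS2, hS1, ← Finset.sum_add_sum_compl S, add_sub_add_comm]
  exact (posSemidef_sum_hadamard_self_sub S fun r _ => hpsd r).add
    (posSemidef_sum_hadamard_self_sub Sᶜ fun r _ => hpsd r)

theorem complete_graph_maximizes_lap_avg_mixing {n d : ℕ}
    (J : Matrix (Fin n) (Fin n) ℝ) (hJ : J = Matrix.of fun _ _ => 1)
    (E : Fin (d + 1) → Matrix (Fin n) (Fin n) ℝ)
    (hsym : ∀ r, (E r).IsSymm)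
    (hidem : ∀ r, E r * E r = E r)
    (horth : ∀ r s, r ≠ s → E r * E s = 0)
    (hsum : ∑ r, E r = 1)
    (S : Finset (Fin (d + 1)))
    (hS1 : (n : ℝ)⁻¹ • J = ∑ r ∈ S, E r)
    (hS2 : 1 - (n : ℝ)⁻¹ • J = ∑ r ∈ Sᶜ, E r) :
    ((((n : ℝ)⁻¹ • J).hadamard ((n : ℝ)⁻¹ • J) +
        (1 - (n : ℝ)⁻¹ • J).hadamard (1 - (n : ℝ)⁻¹ • J))
      - ∑ r, (E r).hadamard (E r)).PosSemidef :=
  complete_graph_maximizes_lap_avg_mixing_general J E hsym hidem S hS1 hS2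
end

section
/- Let X be a graph with adjacency matrix A, let λ be an eigenvalue of A with orthogonal eigenprojection F, and let μ be a root of t² − λt − 1 = 0. Then the 2n×2n block matrix E = (1/(μ²+1))·[[μ²F, μF],[μF, F]] is idempotent and satisfies [[A, I],[I, 0]]·E = μ·E. In particular μ is an eigenvalue of the block matrix [[A, I],[I, 0]]. -/
open Matrix

theorem rooted_product_idempotents {n : ℕ} (A F : Matrix (Fin n) (Fin n) ℝ)
    (hA : A.IsSymm) (hF : F.IsSymm) (hidem : F * F = F)
    (lam mu : ℝ) (heig : A * F = lam • F) (hmu : mu ^ 2 - lam * mu - 1 = 0) :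
    let B : Matrix (Fin n ⊕ Fin n) (Fin n ⊕ Fin n) ℝ := Matrix.fromBlocks A 1 1 0
    let E : Matrix (Fin n ⊕ Fin n) (Fin n ⊕ Fin n) ℝ :=
      (mu ^ 2 + 1)⁻¹ • Matrix.fromBlocks (mu ^ 2 • F) (mu • F) (mu • F) F
    E * E = E ∧ B * E = mu • E ∧ (F ≠ 0 → ∃ w : Fin n ⊕ Fin n → ℝ, w ≠ 0 ∧ B *ᵥ w = mu • w) := by
  intro B E
  have hc : (mu ^ 2 + 1) ≠ 0 := by positivity
  set M : Matrix (Fin n ⊕ Fin n) (Fin n ⊕ Fin n) ℝ :=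
    Matrix.fromBlocks (mu ^ 2 • F) (mu • F) (mu • F) F with hM
  have hMM : M * M = (mu ^ 2 + 1) • M := by
    rw [hM, Matrix.fromBlocks_multiply, Matrix.fromBlocks_smul]
    refine Matrix.fromBlocks_inj.mpr ⟨?_, ?_, ?_, ?_⟩ <;>
      simp only [Matrix.smul_mul, Matrix.mul_smul, hidem, smul_smul] <;> module
  have h3 : mu * mu ^ 2 = mu ^ 2 * lam + mu := by linear_combination mu * hmu
  have h2 : mu * mu = mu * lam + 1 := by linear_combination hmu
  have hBM : B * M = mu • M := by
    show Matrix.fromBlocks A 1 1 0 * M = mu • M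
    rw [hM, Matrix.fromBlocks_multiply, Matrix.fromBlocks_smul]
    refine Matrix.fromBlocks_inj.mpr ⟨?_, ?_, ?_, ?_⟩
    · rw [Matrix.mul_smul, heig, smul_smul, Matrix.one_mul, smul_smul, h3, add_smul]
    · rw [Matrix.mul_smul, heig, smul_smul, Matrix.one_mul, smul_smul, h2, add_smul, one_smul]
    · simp [smul_smul, pow_two]
    · simp
  have hEE : E * E = E := by
    show ((mu ^ 2 + 1)⁻¹ • M) * ((mu ^ 2 + 1)⁻¹ • M) = (mu ^ 2 + 1)⁻¹ • M
    rw [Matrix.smul_mul, Matrix.mul_smul, hMM, smul_smul, smul_smul,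
      mul_assoc, inv_mul_cancel₀ hc, mul_one]
  have hBE : B * E = mu • E := by
    show B * ((mu ^ 2 + 1)⁻¹ • M) = mu • ((mu ^ 2 + 1)⁻¹ • M)
    rw [Matrix.mul_smul, hBM, smul_comm]
  refine ⟨hEE, hBE, fun hFne => ?_⟩
  obtain ⟨i, j, hij⟩ : ∃ i j, F i j ≠ 0 := by
    by_contra h
    push_neg at h
    exact hFne (by ext i j; simp [h])
  refine ⟨fun k => E k (Sum.inr j), ?_, ?_⟩
  · intro h
    have := congrFun h (Sum.inr i)
    simp only [Pi.zero_apply] at this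
    have : E (Sum.inr i) (Sum.inr j) = (mu ^ 2 + 1)⁻¹ * F i j := by
      simp [E, hM, Matrix.fromBlocks]
    rw [this] at *
    exact (mul_ne_zero (inv_ne_zero hc) hij) (by assumption)
  · funext k
    have := congrFun (congrFun hBE k) (Sum.inr j)
    simpa [Matrix.mul_apply, Matrix.mulVec, dotProduct] using this
end

section
/- Let E_0,…,E_d and F_0,…,F_e be two families of symmetric orthogonal idempotents, each summing to the identity, with pairwise products zero within each family. Suppose each F_s is a sum of a subset of the E_r's (the E-family refines the F-family). Then Σ_s F_s∘F_s − Σ_r E_r∘E_r is positive semidefinite. -/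
/-!
Write `F s = ∑ r ∈ S s, E r`. The matrix `F s ⊙ F s − ∑ r ∈ S s, E r ⊙ E r` is positive
semidefinite: adding a summand `H` to `G` adds `G ⊙ H + H ⊙ G` to it, which is positive
semidefinite by the Schur product theorem. Summed over `s`, the subtracted diagonal terms give
exactly `∑ r, E r ⊙ E r`, because `E r = E r * ∑ s, F s = #{s | r ∈ S s} • E r`.
-/

open Matrix Finset
open scoped ComplexOrder

section PosSemidef

variable {ι 𝕜 : Type*} [RCLike 𝕜]

theorem Matrix.IsHermitian.posSemidef_of_mul_self_eq [Fintype ι] {A : Matrix ι ι 𝕜}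
    (hA : A.IsHermitian) (h : A * A = A) : A.PosSemidef := by
  simpa only [hA.eq, h] using posSemidef_conjTranspose_mul_self A

theorem Matrix.posSemidef_sum_hadamard_sum_sub_sum_hadamard {κ : Type*} (s : Finset κ)
    {G : κ → Matrix ι ι 𝕜} (hG : ∀ k ∈ s, (G k).PosSemidef) :
    ((∑ k ∈ s, G k) ⊙ (∑ k ∈ s, G k) - ∑ k ∈ s, G k ⊙ G k).PosSemidef := by
  classical
  induction s using Finset.induction_on with
  | empty => simpa using PosSemidef.zero
  | insert a t ha ih =>
    rw [forall_mem_insert] at hG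
    set T := ∑ k ∈ t, G k
    have hT : T.PosSemidef := posSemidef_sum t hG.2
    have hsplit : (G a + T) ⊙ (G a + T) - (G a ⊙ G a + ∑ k ∈ t, G k ⊙ G k) =
        (T ⊙ T - ∑ k ∈ t, G k ⊙ G k) + (G a ⊙ T + T ⊙ G a) := by
      simp only [add_hadamard, hadamard_add]
      abel
    rw [sum_insert ha, sum_insert ha, hsplit]
    exact (ih hG.2).add ((hG.1.hadamard hT).add (hT.hadamard hG.1))

end PosSemidef

section Refinement

variable {R ι κ : Type*} [Semiring R] [Fintype κ] {E : ι → R}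

theorem OrthogonalIdempotents.card_filter_mem_nsmul [DecidableEq ι]
    (hE : OrthogonalIdempotents E) (S : κ → Finset ι) (hS : ∑ k, ∑ i ∈ S k, E i = 1) (i : ι) :
    #{k | i ∈ S k} • E i = E i :=
  calc #{k | i ∈ S k} • E i = ∑ k, if i ∈ S k then E i else 0 := by
        rw [sum_ite, sum_const_zero, add_zero, sum_const]
    _ = E i * ∑ k, ∑ j ∈ S k, E j := by
        rw [mul_sum]
        refine sum_congr rfl fun k _ => ?_
        split_ifs with h
        · exact (hE.mul_sum_of_mem h).symm
        · exact (hE.mul_sum_of_notMem h).symm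
    _ = E i := by rw [hS, mul_one]

theorem OrthogonalIdempotents.sum_sum_hadamard_self {n α : Type*} [Fintype n] [DecidableEq n]
    [CommSemiring α] [Fintype ι] {E : ι → Matrix n n α} (hE : OrthogonalIdempotents E)
    (S : κ → Finset ι) (hS : ∑ k, ∑ i ∈ S k, E i = 1) :
    ∑ k, ∑ i ∈ S k, E i ⊙ E i = ∑ i, E i ⊙ E i := by
  classical
  rw [sum_comm' (s' := fun i => ({k | i ∈ S k} : Finset κ)) (t' := univ) (by simp)]
  refine sum_congr rfl fun i _ => ?_
  rw [sum_const, ← smul_hadamard, hE.card_filter_mem_nsmul S hS]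

end Refinement

theorem refinement_psd_general {n d e : ℕ}
    (E : Fin (d + 1) → Matrix (Fin n) (Fin n) ℝ)
    (F : Fin (e + 1) → Matrix (Fin n) (Fin n) ℝ)
    (hEsym : ∀ r, (E r).IsSymm) (hEidem : ∀ r, E r * E r = E r)
    (hEorth : ∀ r s, r ≠ s → E r * E s = 0)
    (hFsum : ∑ s, F s = 1)
    (hrefine : ∀ s, ∃ S : Finset (Fin (d + 1)), F s = ∑ r ∈ S, E r) :
    ((∑ s, (F s).hadamard (F s)) - ∑ r, (E r).hadamard (E r)).PosSemidef := by
  choose S hS using hrefine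
  have hE : OrthogonalIdempotents E := ⟨hEidem, fun r s h => hEorth r s h⟩
  have hEpsd : ∀ r, (E r).PosSemidef := fun r =>
    (isHermitian_iff_isSymm.mpr (hEsym r)).posSemidef_of_mul_self_eq (hEidem r)
  have hSsum : ∑ s, ∑ r ∈ S s, E r = 1 := by simpa only [hS] using hFsum
  rw [← hE.sum_sum_hadamard_self S hSsum, ← sum_sub_distrib]
  refine posSemidef_sum _ fun s _ => ?_
  rw [hS s]
  exact posSemidef_sum_hadamard_sum_sub_sum_hadamard _ fun r _ => hEpsd r

theorem refinement_psd {n d e : ℕ}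
    (E : Fin (d + 1) → Matrix (Fin n) (Fin n) ℝ)
    (F : Fin (e + 1) → Matrix (Fin n) (Fin n) ℝ)
    (hEsym : ∀ r, (E r).IsSymm) (hEidem : ∀ r, E r * E r = E r)
    (hEorth : ∀ r s, r ≠ s → E r * E s = 0) (hEsum : ∑ r, E r = 1)
    (hFsym : ∀ s, (F s).IsSymm) (hFidem : ∀ s, F s * F s = F s)
    (hForth : ∀ s t, s ≠ t → F s * F t = 0) (hFsum : ∑ s, F s = 1)
    (hrefine : ∀ s, ∃ S : Finset (Fin (d + 1)), F s = ∑ r ∈ S, E r) :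
    ((∑ s, (F s).hadamard (F s)) - ∑ r, (E r).hadamard (E r)).PosSemidef :=
  refinement_psd_general E F hEsym hEidem hEorth hFsum hrefine
end

section
/- Let X and Y be graphs with adjacency spectral idempotents E_1,…,E_ℓ and F_1,…,F_k respectively. Then the average mixing matrix of the Cartesian product X□Y dominates the Kronecker product of the average mixing matrices: M̂(X□Y) − M̂(X)⊗M̂(Y) is positive semidefinite. -/
/-!
Put `H (r, s) = E r ⊗ₖ F s`. These matrices are positive semidefinite, sum to `1`, and satisfy
`(A ⊗ₖ 1 + 1 ⊗ₖ B) * H (r, s) = (λ r + μ s) • H (r, s)`. Against the complete orthogonal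
idempotents `G i` of the Cartesian product this forces `G i * H q` to be `H q` or `0` according
as the eigenvalue of `H q` is `ν i` or not, so `G i` is the sum of the `H q` in the fibre
`S i = {q | λ q.1 + μ q.2 = ν i}`, and the fibres carry every nonzero `H q`. Since
`M̂(X) ⊗ₖ M̂(Y) = ∑ q, H q ⊙ H q`, it remains to compare `∑ q ∈ S i, H q ⊙ H q` with
`(∑ q ∈ S i, H q) ⊙ (∑ q ∈ S i, H q)`: their difference is the sum of the cross terms
`H q ⊙ H q'`, which are positive semidefinite by the Schur product theorem.
-/

open Matrix Kronecker
open scoped MatrixOrder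

namespace Matrix

variable {ι κ n α : Type*}

theorem sum_hadamard [NonUnitalNonAssocSemiring α]
    (s : Finset ι) (A : ι → Matrix n n α) (B : Matrix n n α) :
    (∑ i ∈ s, A i) ⊙ B = ∑ i ∈ s, A i ⊙ B := by
  ext a b
  simp [sum_apply, Finset.sum_mul]

theorem hadamard_sum [NonUnitalNonAssocSemiring α]
    (s : Finset ι) (A : Matrix n n α) (B : ι → Matrix n n α) :
    A ⊙ (∑ i ∈ s, B i) = ∑ i ∈ s, A ⊙ B i := by
  ext a b
  simp [sum_apply, Finset.mul_sum]

theorem sum_kronecker_sum {m : Type*} [Fintype ι] [Fintype κ] [NonUnitalNonAssocSemiring α]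
    (A : ι → Matrix n n α) (B : κ → Matrix m m α) :
    (∑ i, A i) ⊗ₖ (∑ j, B j) = ∑ q : ι × κ, A q.1 ⊗ₖ B q.2 := by
  ext ⟨a, b⟩ ⟨c, d⟩
  simp [sum_apply, Fintype.sum_prod_type, Finset.sum_mul_sum]

theorem kronecker_one_add_one_kronecker_mul_kronecker {m : Type*} [Fintype n] [Fintype m]
    [DecidableEq n] [DecidableEq m] [CommRing α]
    {A E : Matrix n n α} {B F : Matrix m m α} {a b : α}
    (hA : A * E = a • E) (hB : B * F = b • F) :
    (A ⊗ₖ (1 : Matrix m m α) + (1 : Matrix n n α) ⊗ₖ B) * (E ⊗ₖ F) = (a + b) • (E ⊗ₖ F) := by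
  rw [add_mul, ← mul_kronecker_mul, ← mul_kronecker_mul, one_mul, one_mul, hA, hB,
    smul_kronecker, kronecker_smul, add_smul]

theorem IsSymm.posSemidef_of_isIdempotentElem [Fintype n] {P : Matrix n n ℝ} (hs : P.IsSymm)
    (hi : IsIdempotentElem P) : P.PosSemidef :=
  IsStarProjection.nonneg ⟨hi, hs⟩ |>.posSemidef

open scoped ComplexOrder in
theorem sum_hadamard_self_le_hadamard_self_sum {𝕜 : Type*} [RCLike 𝕜] [Fintype n]
    {s : Finset κ} {H : κ → Matrix n n 𝕜} (hH : ∀ q ∈ s, (H q).PosSemidef) :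
    ∑ q ∈ s, H q ⊙ H q ≤ (∑ q ∈ s, H q) ⊙ (∑ q ∈ s, H q) := by
  rw [sum_hadamard]
  gcongr with q hq
  rw [hadamard_sum]
  exact Finset.single_le_sum (f := fun q' => H q ⊙ H q')
    (fun q' hq' => ((hH q hq).hadamard (hH q' hq')).nonneg) hq

end Matrix

section Spectral

variable {K R ι κ : Type*} [Fintype ι]

theorem OrthogonalIdempotents.sum_smul_mul [CommSemiring K] [Semiring R] [Algebra K R]
    {e : ι → R} (he : OrthogonalIdempotents e) (c : ι → K) (i : ι) :
    (∑ j, c j • e j) * e i = c i • e i := by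
  classical
  simp [Finset.sum_mul, he.mul_eq]

theorem OrthogonalIdempotents.mul_sum_smul [CommSemiring K] [Semiring R] [Algebra K R]
    {e : ι → R} (he : OrthogonalIdempotents e) (c : ι → K) (i : ι) :
    e i * ∑ j, c j • e j = c i • e i := by
  classical
  simp [Finset.mul_sum, he.mul_eq]

variable [Field K] [Ring R] [Algebra K R]

theorem mul_eq_zero_of_mul_eq_smul_of_mul_eq_smul {g c h : R} {a b : K}
    (hg : g * c = a • g) (hh : c * h = b • h) (hab : a ≠ b) : g * h = 0 := by
  have hsmul : a • (g * h) = b • (g * h) := by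
    rw [← smul_mul_assoc, ← hg, mul_assoc, hh, mul_smul_comm]
  rw [← sub_eq_zero, ← sub_smul] at hsmul
  exact (smul_eq_zero.mp hsmul).resolve_left (sub_ne_zero.mpr hab)

variable [DecidableEq K] {g : ι → R} {c : R} {ν : ι → K}

theorem CompleteOrthogonalIdempotents.mul_eq_ite_of_mul_eq_smul
    (hg : CompleteOrthogonalIdempotents g) (hgc : ∀ i, g i * c = ν i • g i)
    (hν : Function.Injective ν) {h : R} {b : K} (hh : c * h = b • h) (i : ι) :
    g i * h = if b = ν i then h else 0 := by
  split_ifs with hbi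
  · calc g i * h = ∑ j, g j * h :=
          (Finset.sum_eq_single i (fun j _ hji => mul_eq_zero_of_mul_eq_smul_of_mul_eq_smul
            (hgc j) hh (hbi ▸ hν.ne hji)) (by simp)).symm
      _ = h := by rw [← Finset.sum_mul, hg.complete, one_mul]
  · exact mul_eq_zero_of_mul_eq_smul_of_mul_eq_smul (hgc i) hh (Ne.symm hbi)

variable [Fintype κ]

theorem CompleteOrthogonalIdempotents.eq_sum_filter_of_mul_eq_smul
    (hg : CompleteOrthogonalIdempotents g) (hgc : ∀ i, g i * c = ν i • g i)
    (hν : Function.Injective ν) {h : κ → R} {θ : κ → K} (hh : ∀ q, c * h q = θ q • h q)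
    (hsum : ∑ q, h q = 1) (i : ι) :
    g i = ∑ q with θ q = ν i, h q := by
  calc g i = ∑ q, g i * h q := by rw [← Finset.mul_sum, hsum, mul_one]
    _ = ∑ q with θ q = ν i, h q := by
      rw [Finset.sum_filter]
      exact Finset.sum_congr rfl fun q _ => hg.mul_eq_ite_of_mul_eq_smul hgc hν (hh q) i

end Spectral

theorem CompleteOrthogonalIdempotents.sum_hadamard_self_eq_sum_sum_filter
    {K ι κ n α : Type*} [Field K] [DecidableEq K] [Fintype ι] [Fintype κ] [Fintype n]
    [DecidableEq n] [CommRing α] [Algebra K α] {G : ι → Matrix n n α} {C : Matrix n n α}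
    {ν : ι → K} (hG : CompleteOrthogonalIdempotents G) (hGC : ∀ i, G i * C = ν i • G i)
    (hν : Function.Injective ν) {H : κ → Matrix n n α} {θ : κ → K}
    (hH : ∀ q, C * H q = θ q • H q) :
    ∑ q, H q ⊙ H q = ∑ i, ∑ q with θ q = ν i, H q ⊙ H q := by
  calc ∑ q, H q ⊙ H q = ∑ q, ∑ i, (G i * H q) ⊙ H q := by
        simp_rw [← sum_hadamard, ← Finset.sum_mul, hG.complete, one_mul]
    _ = ∑ i, ∑ q with θ q = ν i, H q ⊙ H q := by
        rw [Finset.sum_comm]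
        refine Finset.sum_congr rfl fun i _ => ?_
        rw [Finset.sum_filter]
        refine Finset.sum_congr rfl fun q _ => ?_
        rw [hG.mul_eq_ite_of_mul_eq_smul hGC hν (hH q)]
        split_ifs <;> simp

theorem avg_mixing_cartesian_product_general {n m l k p : ℕ}
    (A : Matrix (Fin n) (Fin n) ℝ) (B : Matrix (Fin m) (Fin m) ℝ)
    (E : Fin l → Matrix (Fin n) (Fin n) ℝ) (lam : Fin l → ℝ)
    (F : Fin k → Matrix (Fin m) (Fin m) ℝ) (mu : Fin k → ℝ)
    (G : Fin p → Matrix (Fin n × Fin m) (Fin n × Fin m) ℝ) (nu : Fin p → ℝ)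
    (hEsym : ∀ r, (E r).IsSymm)
    (hEorth : ∀ r s, r ≠ s → E r * E s = 0) (hEsum : ∑ r, E r = 1)
    (hAdec : A = ∑ r, lam r • E r)
    (hFsym : ∀ r, (F r).IsSymm)
    (hForth : ∀ r s, r ≠ s → F r * F s = 0) (hFsum : ∑ r, F r = 1)
    (hBdec : B = ∑ r, mu r • F r)
    (hGorth : ∀ r s, r ≠ s → G r * G s = 0) (hGsum : ∑ r, G r = 1)
    (hCdec : A ⊗ₖ (1 : Matrix (Fin m) (Fin m) ℝ) +
        (1 : Matrix (Fin n) (Fin n) ℝ) ⊗ₖ B = ∑ r, nu r • G r)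
    (hnu : Function.Injective nu) :
    ((∑ r, (G r).hadamard (G r)) -
        (∑ r, (E r).hadamard (E r)) ⊗ₖ (∑ r, (F r).hadamard (F r))).PosSemidef := by
  have hE := CompleteOrthogonalIdempotents.iff_ortho_complete.mpr ⟨hEorth, hEsum⟩
  have hF := CompleteOrthogonalIdempotents.iff_ortho_complete.mpr ⟨hForth, hFsum⟩
  have hG := CompleteOrthogonalIdempotents.iff_ortho_complete.mpr ⟨hGorth, hGsum⟩
  set H : Fin l × Fin k → Matrix (Fin n × Fin m) (Fin n × Fin m) ℝ := fun q => E q.1 ⊗ₖ F q.2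
  have hH : ∀ q, (A ⊗ₖ 1 + 1 ⊗ₖ B) * H q = (lam q.1 + mu q.2) • H q := fun q =>
    kronecker_one_add_one_kronecker_mul_kronecker (hAdec ▸ hE.sum_smul_mul lam q.1)
      (hBdec ▸ hF.sum_smul_mul mu q.2)
  have hGC : ∀ i, G i * (A ⊗ₖ 1 + 1 ⊗ₖ B) = nu i • G i := fun i => hCdec ▸ hG.mul_sum_smul nu i
  have hHsum : ∑ q, H q = 1 := by rw [← sum_kronecker_sum, hEsum, hFsum, one_kronecker_one]
  have hHpsd : ∀ q, (H q).PosSemidef := fun q =>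
    ((hEsym q.1).posSemidef_of_isIdempotentElem (hE.idem q.1)).kronecker
      ((hFsym q.2).posSemidef_of_isIdempotentElem (hF.idem q.2))
  rw [← le_iff, sum_kronecker_sum]
  simp_rw [hadamard_kronecker_hadamard]
  rw [hG.sum_hadamard_self_eq_sum_sum_filter hGC hnu hH]
  gcongr with i
  rw [hG.eq_sum_filter_of_mul_eq_smul hGC hnu hH hHsum i]
  exact sum_hadamard_self_le_hadamard_self_sum fun q _ => hHpsd q

theorem avg_mixing_cartesian_product {n m l k p : ℕ}
    (A : Matrix (Fin n) (Fin n) ℝ) (B : Matrix (Fin m) (Fin m) ℝ)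
    (E : Fin l → Matrix (Fin n) (Fin n) ℝ) (lam : Fin l → ℝ)
    (F : Fin k → Matrix (Fin m) (Fin m) ℝ) (mu : Fin k → ℝ)
    (G : Fin p → Matrix (Fin n × Fin m) (Fin n × Fin m) ℝ) (nu : Fin p → ℝ)
    (hEsym : ∀ r, (E r).IsSymm) (hEidem : ∀ r, E r * E r = E r)
    (hEorth : ∀ r s, r ≠ s → E r * E s = 0) (hEsum : ∑ r, E r = 1)
    (hAdec : A = ∑ r, lam r • E r) (hlam : Function.Injective lam)
    (hFsym : ∀ r, (F r).IsSymm) (hFidem : ∀ r, F r * F r = F r)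
    (hForth : ∀ r s, r ≠ s → F r * F s = 0) (hFsum : ∑ r, F r = 1)
    (hBdec : B = ∑ r, mu r • F r) (hmu : Function.Injective mu)
    (hGsym : ∀ r, (G r).IsSymm) (hGidem : ∀ r, G r * G r = G r)
    (hGorth : ∀ r s, r ≠ s → G r * G s = 0) (hGsum : ∑ r, G r = 1)
    (hCdec : A ⊗ₖ (1 : Matrix (Fin m) (Fin m) ℝ) +
        (1 : Matrix (Fin n) (Fin n) ℝ) ⊗ₖ B = ∑ r, nu r • G r)
    (hnu : Function.Injective nu) :
    ((∑ r, (G r).hadamard (G r)) -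
        (∑ r, (E r).hadamard (E r)) ⊗ₖ (∑ r, (F r).hadamard (F r))).PosSemidef :=
  avg_mixing_cartesian_product_general A B E lam F mu G nu hEsym hEorth hEsum hAdec hFsym hForth
    hFsum hBdec hGorth hGsum hCdec hnu
end
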